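/- arXiv:2307.11198 — 4 statements merged into one kernel-verified Lean document; each statement's English description precedes it below -/
import Mathlib

section
/- Let (c_n) be a sequence of real numbers with 1 + c_n > 0 for all n. Then the series ∑ c_n²/(1+c_n) converges if and only if the series ∑ c_n² converges. -/
theorem stmt_0 (c : ℕ → ℝ) (hc : ∀ n, 1 + c n > 0) :
    Summable (fun n => (c n) ^ 2 / (1 + c n)) ↔ Summable (fun n => (c n) ^ 2) := by
  have hnn : ∀ n, 0 ≤ (c n) ^ 2 / (1 + c n) := fun n =>
    div_nonneg (sq_nonneg _) (le_of_lt (hc n))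
  constructor
  · intro h
    have h0 : Filter.Tendsto (fun n => (c n) ^ 2 / (1 + c n)) Filter.atTop (nhds 0) :=
      h.tendsto_atTop_zero
    have hev : ∀ᶠ n in Filter.atTop, |c n| ≤ 1/2 := by
      filter_upwards [h0.eventually (gt_mem_nhds (by norm_num : (0:ℝ) < 1/6))] with n hn
      by_contra habs
      push_neg at habs
      exact absurd hn (not_lt.mpr (by
        rcases le_or_gt (c n) 0 with hcn | hcn
        · have h1 : c n < -(1/2) := by
            rcases abs_cases (c n) with ⟨he, _⟩ | ⟨he, _⟩ <;> nlinarith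
          have h2 : 1 + c n < 1/2 := by linarith
          rw [le_div_iff₀ (hc n)]
          nlinarith
        · have h1 : (1/2:ℝ) < c n := by
            rcases abs_cases (c n) with ⟨he, _⟩ | ⟨he, _⟩ <;> nlinarith
          rw [le_div_iff₀ (hc n)]
          nlinarith))
    apply summable_of_isBigO_nat h
    rw [Asymptotics.isBigO_iff]
    refine ⟨2, ?_⟩
    filter_upwards [hev] with n hn
    have h1 : 1 + c n ≤ 2 := by
      rcases abs_cases (c n) with ⟨he, _⟩ | ⟨he, _⟩ <;> linarith
    rw [Real.norm_eq_abs, Real.norm_eq_abs, abs_of_nonneg (sq_nonneg _),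
      abs_of_nonneg (hnn n), mul_div_assoc', le_div_iff₀ (hc n)]
    have h2 := abs_le.mp hn
    nlinarith [sq_nonneg (c n)]
  · intro h
    have h0 : Filter.Tendsto (fun n => (c n) ^ 2) Filter.atTop (nhds 0) :=
      h.tendsto_atTop_zero
    have hev : ∀ᶠ n in Filter.atTop, (1:ℝ)/2 ≤ 1 + c n := by
      filter_upwards [h0.eventually (gt_mem_nhds (by norm_num : (0:ℝ) < 1/4))] with n hn
      nlinarith [abs_nonneg (c n), sq_abs (c n)]
    apply summable_of_isBigO_nat h
    rw [Asymptotics.isBigO_iff]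
    refine ⟨2, ?_⟩
    filter_upwards [hev] with n hn
    rw [Real.norm_eq_abs, Real.norm_eq_abs, abs_of_nonneg (hnn n),
      abs_of_nonneg (sq_nonneg _), div_le_iff₀ (hc n)]
    nlinarith [sq_nonneg (c n)]
end

section
/- Let (c_n) and (e_n) be sequences of real numbers with 1 + c_n > 0 for all n and (1+c_n)(1+e_n) = 1 for all n. Then the following three series converge or diverge simultaneously: ∑ ((1+e_n)^{1/2} − (1+e_n)^{−1/2})², ∑ c_n², and ∑ e_n². -/
/-!
With `b = 1 + e = (1 + c)⁻¹`, the three terms are `e² / b`, `e² / b²` and `e²`. Each of the three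
series has terms tending to `0`, which forces `e → 0`, i.e. `b → 1`; the three series are then
asymptotically equivalent.
-/

open Filter Topology Asymptotics

lemma summable_mul_iff_of_tendsto_one {ι : Type*} {f g : ι → ℝ}
    (hg : Tendsto g cofinite (𝓝 1)) : Summable (fun i => f i * g i) ↔ Summable f := by
  have h : (fun i => f i * g i) ~[cofinite] fun i => f i * 1 :=
    IsEquivalent.refl.mul ((isEquivalent_const_iff_tendsto one_ne_zero).2 hg)
  simpa using h.summable_iff

lemma sqrt_sub_inv_sqrt_sq {x : ℝ} (hx : 0 ≤ x) : (√x - (√x)⁻¹) ^ 2 = (x - 1) ^ 2 / x := by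
  rcases hx.eq_or_lt with rfl | hx
  · simp
  have hs : 0 < √x := Real.sqrt_pos.2 hx
  have hsx : √x ^ 2 = x := Real.sq_sqrt hx.le
  set s := √x
  rw [← hsx]
  field_simp

section Tendsto

variable {α : Type*} {l : Filter α} {x y : α → ℝ}

lemma tendsto_zero_of_tendsto_sq (h : Tendsto (fun a => x a ^ 2) l (𝓝 0)) :
    Tendsto x l (𝓝 0) := by
  rw [tendsto_zero_iff_abs_tendsto_zero]
  simpa [Function.comp_def, Real.sqrt_sq_eq_abs] using h.sqrt

lemma tendsto_zero_of_tendsto_sq_div_one_add (hx : ∀ a, 0 < 1 + x a)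
    (h : Tendsto (fun a => x a ^ 2 / (1 + x a)) l (𝓝 0)) : Tendsto x l (𝓝 0) := by
  refine tendsto_zero_of_tendsto_sq (squeeze_zero' (.of_forall fun a => sq_nonneg (x a))
    ?_ (by simpa using h.const_mul 2))
  filter_upwards [h.eventually (gt_mem_nhds one_half_pos)] with a ha
  have hxa := hx a
  rw [div_lt_iff₀ hxa] at ha
  have hlt : x a < 1 := by nlinarith [sq_nonneg (x a - 1)]
  rw [mul_div_assoc', le_div_iff₀ hxa]
  nlinarith [mul_nonneg (sq_nonneg (x a)) (sub_nonneg.2 hlt.le)]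

lemma tendsto_one_add_inv (hx : Tendsto x l (𝓝 0)) :
    Tendsto (fun a => (1 + x a)⁻¹) l (𝓝 1) := by
  simpa using (tendsto_const_nhds.add hx).inv₀ (by norm_num : (1 : ℝ) + 0 ≠ 0)

lemma tendsto_zero_of_one_add_mul_one_add_eq_one (hxy : ∀ a, (1 + x a) * (1 + y a) = 1)
    (hx : Tendsto x l (𝓝 0)) : Tendsto y l (𝓝 0) := by
  have h := (tendsto_one_add_inv hx).sub_const 1
  rw [sub_self] at h
  exact h.congr fun a => by linarith [eq_inv_of_mul_eq_one_right (hxy a)]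

end Tendsto

theorem stmt_2 (c e : ℕ → ℝ) (hc : ∀ n, 1 + c n > 0)
    (hce : ∀ n, (1 + c n) * (1 + e n) = 1) :
    (Summable (fun n => (Real.sqrt (1 + e n) - (Real.sqrt (1 + e n))⁻¹) ^ 2) ↔
      Summable (fun n => (c n) ^ 2)) ∧
    (Summable (fun n => (c n) ^ 2) ↔ Summable (fun n => (e n) ^ 2)) := by
  have he (n : ℕ) : 0 < 1 + e n := eq_inv_of_mul_eq_one_right (hce n) ▸ inv_pos.2 (hc n)
  have hT : (fun n => (√(1 + e n) - (√(1 + e n))⁻¹) ^ 2) = fun n => e n ^ 2 * (1 + e n)⁻¹ :=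
    funext fun n => by rw [sqrt_sub_inv_sqrt_sq (he n).le, add_sub_cancel_left, div_eq_mul_inv]
  have hC : (fun n => c n ^ 2) = fun n => e n ^ 2 * (1 + e n)⁻¹ ^ 2 := funext fun n => by
    rw [eq_sub_of_add_eq' (eq_inv_of_mul_eq_one_left (hce n))]
    field_simp [(he n).ne']
    ring
  have he_of_T (h : Summable fun n => e n ^ 2 * (1 + e n)⁻¹) : Tendsto e atTop (𝓝 0) :=
    tendsto_zero_of_tendsto_sq_div_one_add he <| by
      simpa only [div_eq_mul_inv] using h.tendsto_atTop_zero
  have he_of_C (h : Summable fun n => c n ^ 2) : Tendsto e atTop (𝓝 0) :=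
    tendsto_zero_of_one_add_mul_one_add_eq_one hce <|
      tendsto_zero_of_tendsto_sq h.tendsto_atTop_zero
  have he_of_E (h : Summable fun n => e n ^ 2) : Tendsto e atTop (𝓝 0) :=
    tendsto_zero_of_tendsto_sq h.tendsto_atTop_zero
  have hfactor (h : Tendsto e atTop (𝓝 0)) : Tendsto (fun n => (1 + e n)⁻¹) cofinite (𝓝 1) :=
    Nat.cofinite_eq_atTop ▸ tendsto_one_add_inv h
  have hfactor_sq (h : Tendsto e atTop (𝓝 0)) :
      Tendsto (fun n => (1 + e n)⁻¹ ^ 2) cofinite (𝓝 1) := by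
    simpa using (hfactor h).pow 2
  have hTE : Summable (fun n => e n ^ 2 * (1 + e n)⁻¹) ↔ Summable fun n => e n ^ 2 :=
    ⟨fun h => (summable_mul_iff_of_tendsto_one (hfactor (he_of_T h))).1 h,
      fun h => (summable_mul_iff_of_tendsto_one (hfactor (he_of_E h))).2 h⟩
  have hCE : Summable (fun n => c n ^ 2) ↔ Summable fun n => e n ^ 2 :=
    ⟨fun h => (summable_mul_iff_of_tendsto_one (hfactor_sq (he_of_C h))).1 (hC ▸ h),
      fun h => hC ▸ (summable_mul_iff_of_tendsto_one (hfactor_sq (he_of_E h))).2 h⟩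
  rw [hT]
  exact ⟨hTE.trans hCE.symm, hCE⟩
end

section
/- For b > 0 and a, s ∈ ℝ, ∫_ℝ i·x·exp(is(x−a)) dμ_{(b,a)}(x) = (−s/(2b) + ia)·exp(−s²/(4b)), where dμ_{(b,a)}(x) = √(b/π)·exp(−b(x−a)²) dx. -/
/-!
The weight `√(b/π) exp(-b(x-a)²)` is the density of the Gaussian law `N(a, 1/(2b))`. Writing
`e^{is(x-a)} = e^{-isa} e^{isx}`, the integral is `i e^{-isa}` times the first moment
`∫ x e^{zx}` at `z = is`, which is the derivative of the complex moment generating function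
`z ↦ exp(za + z²/(4b))` of that law.
-/

open MeasureTheory ProbabilityTheory Complex NNReal

lemma integral_mul_cexp_mul_gaussianReal (μ : ℝ) (v : ℝ≥0) (z : ℂ) :
    ∫ x, x * cexp (z * x) ∂gaussianReal μ v = (μ + v * z) * cexp (z * μ + v * z ^ 2 / 2) := by
  have hmgf : HasDerivAt (complexMGF id (gaussianReal μ v))
      (∫ x, x * cexp (z * x) ∂gaussianReal μ v) z :=
    hasDerivAt_complexMGF (by simp [integrableExpSet_id_gaussianReal])
  have hexp : HasDerivAt (fun z : ℂ ↦ cexp (z * μ + v * z ^ 2 / 2))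
      ((μ + v * z) * cexp (z * μ + v * z ^ 2 / 2)) z :=
    (((hasDerivAt_id z).mul_const (μ : ℂ)).add
      (((hasDerivAt_pow 2 z).const_mul (v : ℂ)).div_const 2)).cexp.congr_deriv
      (by simp only [Pi.add_apply, id]; push_cast; ring)
  rw [funext complexMGF_id_gaussianReal] at hmgf
  exact hmgf.unique hexp

lemma gaussianPDFReal_inv_two_mul (a : ℝ) {b : ℝ} (hb : 0 < b) (x : ℝ) :
    gaussianPDFReal a (2 * b)⁻¹.toNNReal x = √(b / Real.pi) * Real.exp (-b * (x - a) ^ 2) := by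
  have hv : ((2 * b)⁻¹.toNNReal : ℝ) = (2 * b)⁻¹ := Real.coe_toNNReal _ (by positivity)
  rw [gaussianPDFReal, hv]
  congr 1
  · rw [← Real.sqrt_inv]; congr 1; field_simp
  · congr 1; field_simp

theorem stmt_13 (b a s : ℝ) (hb : 0 < b) :
    ∫ x : ℝ, Complex.I * (x : ℂ) * Complex.exp (Complex.I * (s : ℂ) * ((x : ℂ) - (a : ℂ))) *
        ((Real.sqrt (b / Real.pi) * Real.exp (-b * (x - a) ^ 2) : ℝ) : ℂ) =
      (-(s : ℂ) / (2 * (b : ℂ)) + Complex.I * (a : ℂ)) *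
        Complex.exp (-(s : ℂ) ^ 2 / (4 * (b : ℂ))) := by
  have hb0 : (b : ℂ) ≠ 0 := by exact_mod_cast hb.ne'
  set v := (2 * b)⁻¹.toNNReal
  have hv0 : v ≠ 0 := by simpa [v] using hb
  have hv : (v : ℂ) = (2 * (b : ℂ))⁻¹ := by
    simp [v, hb.le]
  calc _ = ∫ x, gaussianPDFReal a v x •
        (I * cexp (-(I * s * a)) * (x * cexp ((I * s) * x))) := by
        congr 1 with x
        rw [gaussianPDFReal_inv_two_mul a hb, real_smul, mul_sub, sub_eq_add_neg, Complex.exp_add]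
        ring
    _ = I * cexp (-(I * s * a)) * ∫ x, x * cexp ((I * s) * x) ∂gaussianReal a v := by
        rw [integral_gaussianReal_eq_integral_smul hv0]
        simp_rw [← mul_smul_comm, integral_const_mul]
    _ = _ := by
        have hcexp : cexp (-(I * s * a)) * cexp (I * s * a + (2 * (b : ℂ))⁻¹ * (I * s) ^ 2 / 2) =
            cexp (-s ^ 2 / (4 * b)) := by
          rw [← Complex.exp_add]
          congr 1
          field_simp
          linear_combination 4 * (s : ℂ) ^ 2 * I_sq
        rw [integral_mul_cexp_mul_gaussianReal, hv]
        linear_combination I * (a + (2 * b : ℂ)⁻¹ * I * s) * hcexp +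
          cexp (-s ^ 2 / (4 * b)) * s / (2 * b) * I_sq
end

section
/- Let a₁ = (a_{1k}) and a₂ = (a_{2k}) be real sequences with ∑ₖ a_{1k}² = ∞ and ∑ₖ a_{2k}² = ∞, and suppose there exist (C₁,C₂) ∈ ℝ² with C₂ ≠ 0 such that the sequence (C₁a_{1k} + C₂a_{2k})ₖ is square-summable. Then ∑ₖ a_{1k}²/(1 + a_{2k}²) = ∞. -/
set_option maxHeartbeats 1000000

theorem stmt_19 (a₁ a₂ : ℤ → ℝ)
    (h₁ : ¬ Summable (fun k => (a₁ k) ^ 2))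
    (h₂ : ¬ Summable (fun k => (a₂ k) ^ 2))
    (C₁ C₂ : ℝ) (hC₂ : C₂ ≠ 0)
    (h : Summable (fun k => (C₁ * a₁ k + C₂ * a₂ k) ^ 2)) :
    ¬ Summable (fun k => (a₁ k) ^ 2 / (1 + (a₂ k) ^ 2)) := by
  intro hS
  by_cases hC₁ : C₁ = 0
  · apply h₂
    have he : (fun k => (a₂ k)^2) = fun k => (C₁ * a₁ k + C₂ * a₂ k)^2 / C₂^2 := by
      funext k; rw [hC₁]; field_simp; ring
    rw [he]
    exact h.div_const _
  · have hC₂sq : 0 < C₂^2 := by positivity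
    obtain ⟨M, hM0, hMk⟩ : ∃ M, 0 ≤ M ∧ ∀ k, (C₁ * a₁ k + C₂ * a₂ k)^2 ≤ M :=
      ⟨∑' k, (C₁ * a₁ k + C₂ * a₂ k)^2, tsum_nonneg (fun k => sq_nonneg _),
        fun k => Summable.le_tsum h k (fun j _ => sq_nonneg _)⟩
    obtain ⟨D, hD1, hbound⟩ :
        ∃ D, 1 ≤ D ∧ ∀ k, 1 + (a₂ k)^2 ≤ D * (1 + (a₁ k)^2) := by
      refine ⟨(C₂^2 + 2*M + 2*C₁^2)/C₂^2, ?_, ?_⟩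
      · rw [le_div_iff₀ hC₂sq, one_mul]
        nlinarith [sq_nonneg C₁]
      · intro k
        have h1 : C₂^2 * (a₂ k)^2 ≤ 2*(C₁ * a₁ k + C₂ * a₂ k)^2 + 2*C₁^2*(a₁ k)^2 := by
          nlinarith [sq_nonneg (C₁ * a₁ k + (C₁ * a₁ k + C₂ * a₂ k))]
        rw [div_mul_eq_mul_div, le_div_iff₀ hC₂sq]
        nlinarith [hMk k, sq_nonneg (a₁ k), mul_nonneg hM0 (sq_nonneg (a₁ k)),
          mul_nonneg hC₂sq.le (sq_nonneg (a₁ k)), mul_nonneg (sq_nonneg C₁) (sq_nonneg (a₁ k))]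
    have hg : Summable (fun k => (a₁ k)^2 / (1 + (a₁ k)^2)) := by
      apply Summable.of_nonneg_of_le (fun k => by positivity)
        (f := fun k => D * ((a₁ k)^2 / (1 + (a₂ k)^2))) _ (hS.mul_left D)
      intro k
      have hp1 : (0:ℝ) < 1 + (a₁ k)^2 := by positivity
      have hp2 : (0:ℝ) < 1 + (a₂ k)^2 := by positivity
      show (a₁ k)^2 / (1 + (a₁ k)^2) ≤ D * ((a₁ k)^2 / (1 + (a₂ k)^2))
      rw [div_le_iff₀ hp1, mul_comm D, mul_assoc, div_mul_eq_mul_div, le_div_iff₀ hp2]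
      nlinarith [hbound k, sq_nonneg (a₁ k)]
    have hev : {k : ℤ | ¬ (a₁ k)^2 / (1 + (a₁ k)^2) < 1/2}.Finite := by
      have h2 := hg.tendsto_cofinite_zero.eventually
        (eventually_lt_nhds (show (0:ℝ) < 1/2 by norm_num))
      exact Filter.eventually_cofinite.mp h2
    have hφs : Summable (fun k => if (a₁ k)^2 / (1 + (a₁ k)^2) < 1/2 then (0:ℝ) else (a₁ k)^2) := by
      apply summable_of_finite_support
      apply Set.Finite.subset hev
      intro k hk
      simp only [Function.mem_support] at hk
      by_contra hc
      simp only [Set.mem_setOf_eq, not_not] at hc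
      exact hk (if_pos hc)
    apply h₁
    apply Summable.of_nonneg_of_le (fun k => sq_nonneg _)
      (f := fun k => 2 * ((a₁ k)^2 / (1 + (a₁ k)^2)) +
        (if (a₁ k)^2 / (1 + (a₁ k)^2) < 1/2 then (0:ℝ) else (a₁ k)^2)) _ ((hg.mul_left 2).add hφs)
    intro k
    by_cases hk : (a₁ k)^2 / (1 + (a₁ k)^2) < 1/2
    · have hp1 : (0:ℝ) < 1 + (a₁ k)^2 := by positivity
      have ha1 : (a₁ k)^2 < 1 := by
        rw [div_lt_iff₀ hp1] at hk; nlinarith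
      simp only [if_pos hk, add_zero]
      rw [mul_div_assoc', le_div_iff₀ hp1]
      nlinarith [sq_nonneg (a₁ k)]
    · simp only [if_neg hk]
      have hnn : 0 ≤ 2 * ((a₁ k)^2 / (1 + (a₁ k)^2)) := by positivity
      linarith
end
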